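/- Let 2 ≤ q < ∞. There is a constant C, independent of u₀ and R (and of q), such that for every measurable u₀ : ℝ³ → ℝ³ with ‖u₀‖_{E²_q} < ∞ and every R ≥ 1, one has N⁰_{q,R}(u₀) ≤ C R^{2 − 6/q} ‖u₀‖²_{E²_q}. -/

import Mathlib

open MeasureTheory Filter Metric Set
open scoped ENNReal NNReal Topology Real BigOperators

noncomputable section

abbrev E3 : Type := EuclideanSpace ℝ (Fin 3)

/-- A lattice point of `ℤ³` viewed as a point of `ℝ³`. -/
def zc (k : Fin 3 → ℤ) : E3 := WithLp.toLp 2 (fun i => (k i : ℝ))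

/-- The `E²_q` (Wiener amalgam) norm. -/
def e2qNorm (q : ℝ) (f : E3 → E3) : ℝ≥0∞ :=
  (∑' k : Fin 3 → ℤ, (∫⁻ x in ball (zc k) 1, (‖f x‖₊ : ℝ≥0∞) ^ 2) ^ (q/2)) ^ (1/q)

/-- `A_{0,q}(R) = ‖(∫_{B_R(Rk)} |u₀|²)_k‖_{ℓ^{q/2}}`. -/
def A0q (q R : ℝ) (u₀ : E3 → E3) : ℝ≥0∞ :=
  (∑' k : Fin 3 → ℤ, (∫⁻ x in ball (R • zc k) R, (‖u₀ x‖₊ : ℝ≥0∞) ^ 2) ^ (q/2)) ^ (2/q)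

/-- `N⁰_R(u₀) = sup_{x₀} R⁻¹ ∫_{B_R(x₀)} |u₀|²`. -/
def N0R (u₀ : E3 → E3) (R : ℝ) : ℝ≥0∞ :=
  ⨆ x₀ : E3, (ENNReal.ofReal R)⁻¹ * ∫⁻ x in ball x₀ R, (‖u₀ x‖₊ : ℝ≥0∞) ^ 2

/-- `N⁰_{q,R}(u₀) = R⁻¹ A_{0,q}(R)`. -/
def N0q (q R : ℝ) (u₀ : E3 → E3) : ℝ≥0∞ := (ENNReal.ofReal R)⁻¹ * A0q q R u₀

lemma coord_abs_le_dist (x y : E3) (i : Fin 3) : |x i - y i| ≤ dist x y := by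
  rw [EuclideanSpace.dist_eq]
  have h1 : dist (x i) (y i) ^ 2 ≤ ∑ j, dist (x j) (y j) ^ 2 :=
    Finset.single_le_sum (f := fun j => dist (x j) (y j) ^ 2)
      (fun j _ => sq_nonneg _) (Finset.mem_univ i)
  calc |x i - y i| = Real.sqrt (dist (x i) (y i) ^ 2) := by
        rw [Real.sqrt_sq dist_nonneg, Real.dist_eq]
    _ ≤ _ := Real.sqrt_le_sqrt h1

lemma cardIcc_le (u v : ℝ) (h : u ≤ v) : ((Finset.Icc ⌈u⌉ ⌊v⌋).card : ℝ) ≤ v - u + 1 := by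
  rw [Int.card_Icc]
  have h1 := Int.floor_le v
  have h2 := Int.le_ceil u
  rcases le_or_gt (⌊v⌋ + 1 - ⌈u⌉) 0 with hle | hpos
  · rw [Int.toNat_of_nonpos hle]
    simp only [Nat.cast_zero]
    linarith
  · have heq : (((⌊v⌋ + 1 - ⌈u⌉).toNat : ℕ) : ℝ) = ((⌊v⌋ : ℝ) + 1 - (⌈u⌉ : ℝ)) := by
      have h3 := Int.toNat_of_nonneg hpos.le
      have := congrArg (fun z : ℤ => (z : ℝ)) h3
      push_cast at this ⊢
      linarith [this]
    rw [heq]; linarith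

lemma rpow_sum_le_card_mul {ι : Type*} (s : Finset ι) (f : ι → ℝ≥0∞) {p : ℝ} (hp : 1 ≤ p) :
    (∑ i ∈ s, f i) ^ p ≤ (s.card : ℝ≥0∞) ^ (p - 1) * ∑ i ∈ s, f i ^ p := by
  rcases s.eq_empty_or_nonempty with rfl | hs
  · simp [ENNReal.zero_rpow_of_pos (lt_of_lt_of_le one_pos hp)]
  · set n : ℝ≥0∞ := (s.card : ℝ≥0∞) with hn
    have hn0 : n ≠ 0 := by
      simp only [hn, ne_eq, Nat.cast_eq_zero, Finset.card_eq_zero]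
      exact hs.ne_empty
    have hnt : n ≠ ⊤ := ENNReal.natCast_ne_top _
    have hw : ∑ _i ∈ s, n⁻¹ = 1 := by
      rw [Finset.sum_const, nsmul_eq_mul, ← hn]
      exact ENNReal.mul_inv_cancel hn0 hnt
    have key := ENNReal.rpow_arith_mean_le_arith_mean_rpow s (fun _ => n⁻¹) f hw hp
    rw [← Finset.mul_sum, ← Finset.mul_sum,
      ENNReal.mul_rpow_of_nonneg _ _ (by linarith : (0:ℝ) ≤ p)] at key
    have hmul := mul_le_mul_right key (n ^ p)
    rw [← mul_assoc, ← mul_assoc] at hmul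
    have h1 : n ^ p * n⁻¹ ^ p = 1 := by
      rw [← ENNReal.mul_rpow_of_nonneg _ _ (by linarith : (0:ℝ) ≤ p),
        ENNReal.mul_inv_cancel hn0 hnt, ENNReal.one_rpow]
    have h2 : n ^ p * n⁻¹ = n ^ (p - 1) := by
      rw [← ENNReal.rpow_neg_one n, ← ENNReal.rpow_add _ _ hn0 hnt]
      ring_nf
    rw [h1, one_mul, h2] at hmul
    exact hmul

lemma lintegral_biUnion_finset_le {ι : Type*} (s : Finset ι) (t : ι → Set E3) (f : E3 → ℝ≥0∞) :
    ∫⁻ x in ⋃ i ∈ s, t i, f x ≤ ∑ i ∈ s, ∫⁻ x in t i, f x := by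
  classical
  induction s using Finset.induction_on with
  | empty => simp
  | @insert a s' ha ih =>
      rw [Finset.set_biUnion_insert, Finset.sum_insert ha]
      exact (lintegral_union_le f _ _).trans (add_le_add le_rfl ih)

/-- inequality (3.14): there is a constant `C`, independent of `u₀`, `R`
and `q`, such that `N⁰_{q,R}(u₀) ≤ C R^{2−6/q} ‖u₀‖²_{E²_q}` for all `2 ≤ q < ∞`,
`u₀ ∈ E²_q` and `R ≥ 1`. -/
theorem N0q_le_of_E2q :
    ∃ C : ℝ, 0 < C ∧
      ∀ q : ℝ, 2 ≤ q → ∀ u₀ : E3 → E3, Measurable u₀ → e2qNorm q u₀ < ⊤ →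
        ∀ R : ℝ, 1 ≤ R →
          N0q q R u₀ ≤ ENNReal.ofReal (C * R ^ (2 - 6/q)) * (e2qNorm q u₀) ^ 2 := by
  refine ⟨125, by norm_num, ?_⟩
  intro q hq u₀ _ _ R hR
  have hR0 : (0:ℝ) < R := lt_of_lt_of_le one_pos hR
  have hq0 : (0:ℝ) < q := by linarith
  simp only [N0q, A0q, e2qNorm]
  set p : ℝ := q / 2 with hpdef
  have hp1 : 1 ≤ p := by rw [hpdef]; linarith
  have hp0 : 0 < p := lt_of_lt_of_le one_pos hp1
  set a : (Fin 3 → ℤ) → ℝ≥0∞ :=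
    fun j => ∫⁻ x in ball (zc j) 1, (‖u₀ x‖₊ : ℝ≥0∞) ^ 2 with ha
  set b : (Fin 3 → ℤ) → ℝ≥0∞ :=
    fun k => ∫⁻ x in ball (R • zc k) R, (‖u₀ x‖₊ : ℝ≥0∞) ^ 2 with hb
  set T : ℝ≥0∞ := ∑' j : Fin 3 → ℤ, a j ^ p with hT
  set S : (Fin 3 → ℤ) → Finset (Fin 3 → ℤ) := fun k =>
    Finset.Icc (fun i => ⌈R * (k i : ℝ) - (R+1)⌉) (fun i => ⌊R * (k i : ℝ) + (R+1)⌋) with hS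
  set K : (Fin 3 → ℤ) → Finset (Fin 3 → ℤ) := fun j =>
    Finset.Icc (fun i => ⌈((j i : ℝ) - (R+1))/R⌉) (fun i => ⌊((j i : ℝ) + (R+1))/R⌋) with hK
  have hz : ∀ (k : Fin 3 → ℤ) (i : Fin 3), (R • zc k) i = R * (k i : ℝ) := fun k i => by simp [zc]
  -- covering
  have cover : ∀ k, ball (R • zc k) R ⊆ ⋃ j ∈ S k, ball (zc j) 1 := by
    intro k x hx
    have hd : dist x (R • zc k) < R := mem_ball.mp hx
    set j : Fin 3 → ℤ := fun i => round (x i) with hj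
    have hxj : ∀ i, |x i - (j i : ℝ)| ≤ 1/2 := fun i => abs_sub_round (x i)
    have hco : ∀ i, |x i - R * (k i : ℝ)| < R := by
      intro i
      have h := coord_abs_le_dist x (R • zc k) i
      rw [hz k i] at h
      exact lt_of_le_of_lt h hd
    have hji : ∀ i, |(j i : ℝ) - R * (k i : ℝ)| < R + 1 := by
      intro i
      have h := abs_sub_le ((j i : ℝ)) (x i) (R * (k i : ℝ))
      have h1 := hxj i
      have h2 := hco i
      rw [abs_sub_comm] at h1
      linarith
    have hmem : j ∈ S k := by
      rw [hS, Finset.mem_Icc]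
      constructor
      · intro i
        refine Int.ceil_le.mpr ?_
        have := (abs_lt.mp (hji i)).1
        linarith
      · intro i
        refine Int.le_floor.mpr ?_
        have := (abs_lt.mp (hji i)).2
        linarith
    refine Set.mem_iUnion₂.mpr ⟨j, hmem, ?_⟩
    rw [mem_ball, EuclideanSpace.dist_eq]
    have hsum : ∑ i, dist (x i) ((zc j) i) ^ 2 ≤ 3/4 := by
      have hterm : ∀ i : Fin 3, dist (x i) ((zc j) i) ^ 2 ≤ (1/2:ℝ)^2 := by
        intro i
        have : dist (x i) ((zc j) i) = |x i - (j i : ℝ)| := Real.dist_eq _ _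
        rw [this]
        have h1 := hxj i
        nlinarith [abs_nonneg (x i - (j i : ℝ))]
      calc ∑ i, dist (x i) ((zc j) i) ^ 2 ≤ ∑ _i : Fin 3, (1/2:ℝ)^2 :=
            Finset.sum_le_sum fun i _ => hterm i
        _ = 3/4 := by simp [Finset.sum_const]; norm_num
    calc Real.sqrt (∑ i, dist (x i) ((zc j) i) ^ 2) ≤ Real.sqrt (3/4) :=
          Real.sqrt_le_sqrt hsum
      _ < 1 := by
          rw [show (1:ℝ) = Real.sqrt 1 by simp]
          exact Real.sqrt_lt_sqrt (by norm_num) (by norm_num)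
  -- card bounds
  have cardS : ∀ k, ((S k).card : ℝ≥0∞) ≤ ENNReal.ofReal (125 * R^3) := by
    intro k
    have hcard : ((S k).card : ℝ) ≤ 125 * R ^ 3 := by
      rw [hS]
      simp only [Pi.card_Icc]
      push_cast
      calc (∏ i, ((Finset.Icc ⌈R * (k i : ℝ) - (R+1)⌉ ⌊R * (k i : ℝ) + (R+1)⌋).card : ℝ))
          ≤ ∏ _i : Fin 3, (5*R) := by
            refine Finset.prod_le_prod (fun i _ => Nat.cast_nonneg _) (fun i _ => ?_)
            have h := cardIcc_le (R * (k i : ℝ) - (R+1)) (R * (k i : ℝ) + (R+1)) (by linarith)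
            linarith
        _ = 125 * R^3 := by rw [Finset.prod_const]; simp; ring
    calc ((S k).card : ℝ≥0∞) = ENNReal.ofReal ((S k).card : ℝ) := by
          rw [ENNReal.ofReal_natCast]
      _ ≤ _ := ENNReal.ofReal_le_ofReal hcard
  have cardK : ∀ j, (K j).card ≤ 125 := by
    intro j
    have hcard : ((K j).card : ℝ) ≤ 125 := by
      rw [hK]
      simp only [Pi.card_Icc]
      push_cast
      calc (∏ i, ((Finset.Icc ⌈((j i : ℝ) - (R+1))/R⌉ ⌊((j i : ℝ) + (R+1))/R⌋).card : ℝ))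
          ≤ ∏ _i : Fin 3, (5:ℝ) := by
            refine Finset.prod_le_prod (fun i _ => Nat.cast_nonneg _) (fun i _ => ?_)
            have hu : ((j i : ℝ) - (R+1))/R ≤ ((j i : ℝ) + (R+1))/R := by
              gcongr
              linarith
            have h := cardIcc_le (((j i : ℝ) - (R+1))/R) (((j i : ℝ) + (R+1))/R) hu
            have hdd : ((j i : ℝ) + (R+1))/R - ((j i : ℝ) - (R+1))/R ≤ 4 := by
              rw [div_sub_div_same, div_le_iff₀ hR0]
              linarith
            linarith
        _ = 125 := by rw [Finset.prod_const]; norm_num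
    exact_mod_cast hcard
  have hSK : ∀ j k, j ∈ S k → k ∈ K j := by
    intro j k hjk
    rw [hS, Finset.mem_Icc] at hjk
    rw [hK, Finset.mem_Icc]
    obtain ⟨h1, h2⟩ := hjk
    constructor
    · intro i
      refine Int.ceil_le.mpr ?_
      have := Int.le_floor.mp (h2 i)
      rw [div_le_iff₀ hR0]
      have : (j i : ℝ) ≤ R * (k i : ℝ) + (R+1) := this
      nlinarith
    · intro i
      refine Int.le_floor.mpr ?_
      have := Int.ceil_le.mp (h1 i)
      rw [le_div_iff₀ hR0]
      nlinarith
  -- basic integral bound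
  have hb_le : ∀ k, b k ≤ ∑ j ∈ S k, a j := fun k =>
    le_trans (lintegral_mono_set (cover k)) (lintegral_biUnion_finset_le (S k) _ _)
  -- overlap bound
  have hsum3 : ∑' k : Fin 3 → ℤ, ∑ j ∈ S k, a j ^ p ≤ 125 * T := by
    have h1 : ∀ k : Fin 3 → ℤ, ∑ j ∈ S k, a j ^ p
        = ∑' j : Fin 3 → ℤ, Set.indicator (↑(S k)) (fun j => a j ^ p) j := by
      intro k
      rw [tsum_eq_sum (s := S k)
        (fun j hj => Set.indicator_of_notMem (fun hmem => hj (Finset.mem_coe.mp hmem)) _)]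
      exact (Finset.sum_congr rfl fun j hj =>
        (Set.indicator_of_mem (Finset.mem_coe.mpr hj) (fun j => a j ^ p)).symm)
    calc ∑' k : Fin 3 → ℤ, ∑ j ∈ S k, a j ^ p
        = ∑' (k : Fin 3 → ℤ) (j : Fin 3 → ℤ), Set.indicator (↑(S k)) (fun j => a j ^ p) j :=
          tsum_congr h1
      _ = ∑' (j : Fin 3 → ℤ) (k : Fin 3 → ℤ), Set.indicator (↑(S k)) (fun j => a j ^ p) j :=
          ENNReal.tsum_comm
      _ ≤ ∑' j : Fin 3 → ℤ, 125 * a j ^ p := by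
          refine ENNReal.tsum_le_tsum fun j => ?_
          have heq : ∑' k : Fin 3 → ℤ, Set.indicator (↑(S k)) (fun j => a j ^ p) j
              = ∑ k ∈ K j, Set.indicator (↑(S k)) (fun j => a j ^ p) j := by
            refine tsum_eq_sum (fun k hk => Set.indicator_of_notMem (fun hmem => hk ?_) _)
            exact hSK j k (Finset.mem_coe.mp hmem)
          rw [heq]
          calc ∑ k ∈ K j, Set.indicator (↑(S k)) (fun j => a j ^ p) j
              ≤ ∑ _k ∈ K j, a j ^ p := by
                refine Finset.sum_le_sum fun k _ => ?_
                exact Set.indicator_apply_le' (fun _ => le_rfl) (fun _ => zero_le)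
            _ = (K j).card • (a j ^ p) := Finset.sum_const _
            _ ≤ 125 * a j ^ p := by
                rw [nsmul_eq_mul]
                refine mul_le_mul_left ?_ _
                exact_mod_cast cardK j
      _ = 125 * T := by rw [ENNReal.tsum_mul_left]
  set E : ℝ≥0∞ := ENNReal.ofReal (125 * R^3) with hE
  have main : ∑' k : Fin 3 → ℤ, b k ^ p ≤ E ^ (p-1) * (125 * T) := by
    calc ∑' k : Fin 3 → ℤ, b k ^ p
        ≤ ∑' k : Fin 3 → ℤ, E ^ (p-1) * ∑ j ∈ S k, a j ^ p := by
          refine ENNReal.tsum_le_tsum fun k => ?_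
          calc b k ^ p ≤ (∑ j ∈ S k, a j) ^ p :=
                ENNReal.rpow_le_rpow (hb_le k) hp0.le
            _ ≤ ((S k).card : ℝ≥0∞) ^ (p-1) * ∑ j ∈ S k, a j ^ p :=
                rpow_sum_le_card_mul _ _ hp1
            _ ≤ E ^ (p-1) * ∑ j ∈ S k, a j ^ p :=
                mul_le_mul_left (ENNReal.rpow_le_rpow (cardS k) (by linarith)) _
      _ = E ^ (p-1) * ∑' k : Fin 3 → ℤ, ∑ j ∈ S k, a j ^ p := ENNReal.tsum_mul_left
      _ ≤ E ^ (p-1) * (125 * T) := mul_le_mul_right hsum3 _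
  -- final assembly
  have hgoal1 : (ENNReal.ofReal R)⁻¹ * (∑' k : Fin 3 → ℤ, b k ^ p) ^ (2/q)
      ≤ (ENNReal.ofReal R)⁻¹ * (E ^ (p-1) * (125 * T)) ^ (2/q) :=
    mul_le_mul_right (ENNReal.rpow_le_rpow main (by positivity)) _
  have hfinal : (ENNReal.ofReal R)⁻¹ * (E ^ (p-1) * (125 * T)) ^ (2/q)
      = ENNReal.ofReal (125 * R ^ (2 - 6/q)) * T ^ (2/q) := by
    have hs0 : (0:ℝ) ≤ 2/q := by positivity
    rw [ENNReal.mul_rpow_of_nonneg _ _ hs0, ENNReal.mul_rpow_of_nonneg _ _ hs0,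
      ← ENNReal.rpow_mul E (p-1) (2/q)]
    have hexp : (p - 1) * (2/q) = 1 - 2/q := by
      rw [hpdef]; field_simp
    rw [hexp]
    have hE1 : E ^ (1 - 2/q) = ENNReal.ofReal ((125 * R^3) ^ (1 - 2/q)) := by
      rw [hE, ENNReal.ofReal_rpow_of_pos (by positivity)]
    have h125 : (125 : ℝ≥0∞) ^ (2/q) = ENNReal.ofReal ((125:ℝ) ^ (2/q)) := by
      rw [show (125 : ℝ≥0∞) = ENNReal.ofReal (125:ℝ) by norm_num,
        ENNReal.ofReal_rpow_of_pos (by norm_num)]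
    rw [hE1, h125, ← ENNReal.ofReal_inv_of_pos hR0]
    rw [← mul_assoc, ← mul_assoc, ← ENNReal.ofReal_mul (by positivity),
      ← ENNReal.ofReal_mul (by positivity)]
    congr 2
    · -- real equality
      have h1 : (125 * R^3 : ℝ) ^ (1 - 2/q) = 125 ^ (1 - 2/q) * (R^3) ^ (1 - 2/q) :=
        Real.mul_rpow (by norm_num) (by positivity)
      have h2 : ((R:ℝ)^3) ^ (1 - 2/q) = R ^ (3 * (1 - 2/q)) := by
        rw [← Real.rpow_natCast R 3, ← Real.rpow_mul hR0.le]
        norm_num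
      have h3 : (125:ℝ) ^ (1 - 2/q) * 125 ^ (2/q) = 125 := by
        rw [← Real.rpow_add (by norm_num : (0:ℝ) < 125)]
        norm_num
      have h4 : R⁻¹ * R ^ (3 * (1 - 2/q)) = R ^ (2 - 6/q) := by
        rw [← Real.rpow_neg_one R, ← Real.rpow_add hR0]
        congr 1
        field_simp
        ring
      calc R⁻¹ * (125 * R^3 : ℝ) ^ (1 - 2/q) * 125 ^ (2/q)
          = (125 ^ (1 - 2/q) * 125 ^ (2/q)) * (R⁻¹ * R ^ (3 * (1 - 2/q))) := by
            rw [h1, h2]; ring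
        _ = 125 * R ^ (2 - 6/q) := by rw [h3, h4]
  have hT2 : (T ^ (1/q)) ^ 2 = T ^ (2/q) := by
    rw [← ENNReal.rpow_natCast (T ^ (1/q)) 2, ← ENNReal.rpow_mul]
    congr 1
    push_cast
    ring
  calc (ENNReal.ofReal R)⁻¹ * (∑' k : Fin 3 → ℤ, b k ^ p) ^ (2/q)
      ≤ ENNReal.ofReal (125 * R ^ (2 - 6/q)) * T ^ (2/q) := hfinal ▸ hgoal1
    _ = ENNReal.ofReal (125 * R ^ (2 - 6/q)) * (T ^ (1/q)) ^ 2 := by rw [hT2]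


end
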